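/- arXiv:1801.03600 — 2 statements merged into one kernel-verified Lean document; each statement's English description precedes it below -/
import Mathlib

section
/- For every integer k ≥ 1, m_{k+1} + 4·q_{k+1}² ≤ (1 − β_k/2)·(m_k + 4·q_k²) + (18/β_k)·‖z_{k+1} − z_k‖². -/
/-!
Write `b = β_k` and `d = ‖z_{k+1} - z_k‖`. The weights obey `ζ_t^{(k)} = (1 - b) ζ_t^{(k-1)}` for
`t < k` and `ζ_k^{(k)} = b`, and `∑_t ζ_t^{(k-1)} ≤ 1`. The newest extrapolated point satisfies
`z_{k+1} - ŷ_{k+1} = (1 - 1/b) (z_{k+1} - z_k)`, and every older term moves by at most `d` by the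
triangle inequality. This gives `q_{k+1} ≤ (1 - b)(q_k + 2d)` and, with Young's inequality at
parameter `b/2`, `m_{k+1} ≤ (1 - b)(1 + b/2) m_k + 3(1 - b) d² / b`. Young's inequality at
parameter `3b/2` for `(q_k + 2d)²` combines the two.
-/

open Finset

def avgWeight (β : ℕ → ℝ) (t k : ℕ) : ℝ := β t * ∏ i ∈ Icc (t + 1) k, (1 - β i)

def weightedAvg (β : ℕ → ℝ) (k : ℕ) (f : ℕ → ℝ) : ℝ :=
  ∑ t ∈ range (k + 1), avgWeight β t k * f t

section WeightedAvg

variable {β : ℕ → ℝ}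

theorem avgWeight_self (k : ℕ) : avgWeight β k k = β k := by
  simp [avgWeight]

theorem weightedAvg_zero (f : ℕ → ℝ) : weightedAvg β 0 f = β 0 * f 0 := by
  simp [weightedAvg, avgWeight]

theorem avgWeight_succ {t k : ℕ} (h : t ≤ k) :
    avgWeight β t (k + 1) = (1 - β (k + 1)) * avgWeight β t k := by
  rw [avgWeight, avgWeight, prod_Icc_succ_top (by omega)]
  ring

theorem weightedAvg_succ (k : ℕ) (f : ℕ → ℝ) :
    weightedAvg β (k + 1) f = (1 - β (k + 1)) * weightedAvg β k f + β (k + 1) * f (k + 1) := by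
  rw [weightedAvg, sum_range_succ, avgWeight_self, weightedAvg, mul_sum]
  congr 1
  refine sum_congr rfl fun t ht => ?_
  rw [avgWeight_succ (Nat.lt_succ_iff.mp (mem_range.mp ht)), mul_assoc]

variable (hβ : ∀ i, 0 ≤ β i ∧ β i ≤ 1)
include hβ

theorem weightedAvg_mono {k : ℕ} {f g : ℕ → ℝ} (h : ∀ t ≤ k, f t ≤ g t) :
    weightedAvg β k f ≤ weightedAvg β k g := by
  induction k with
  | zero =>
    rw [weightedAvg_zero, weightedAvg_zero]
    exact mul_le_mul_of_nonneg_left (h 0 le_rfl) (hβ 0).1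
  | succ k ih =>
    rw [weightedAvg_succ, weightedAvg_succ]
    gcongr
    · linarith [(hβ (k + 1)).2]
    · exact ih fun t ht => h t (by omega)
    · exact (hβ (k + 1)).1
    · exact h (k + 1) le_rfl

theorem weightedAvg_nonneg {k : ℕ} {f : ℕ → ℝ} (h : ∀ t ≤ k, 0 ≤ f t) :
    0 ≤ weightedAvg β k f := by
  simpa [weightedAvg] using weightedAvg_mono hβ h

/-- The weights sum to at most `1`, so averaging never inflates an additive constant. -/
theorem weightedAvg_mul_add_le (k : ℕ) (f : ℕ → ℝ) (a : ℝ) {c : ℝ} (hc : 0 ≤ c) :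
    weightedAvg β k (fun t => a * f t + c) ≤ a * weightedAvg β k f + c := by
  induction k with
  | zero =>
    rw [weightedAvg_zero, weightedAvg_zero]
    nlinarith [hβ 0]
  | succ k ih =>
    rw [weightedAvg_succ, weightedAvg_succ]
    nlinarith [hβ (k + 1)]

end WeightedAvg

theorem norm_sub_extrapolate_mul {E : Type*} [NormedAddCommGroup E] [NormedSpace ℝ E]
    {b : ℝ} (hb0 : 0 < b) (hb1 : b ≤ 1) (x x' : E) :
    b * ‖x' - ((1 - 1 / b) • x + (1 / b) • x')‖ = (1 - b) * ‖x' - x‖ := by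
  have hsub : x' - ((1 - 1 / b) • x + (1 / b) • x') = (1 - 1 / b) • (x' - x) := by module
  have hcoef : 1 - 1 / b ≤ 0 := by
    rw [sub_nonpos, le_div_iff₀ hb0]
    linarith
  rw [hsub, norm_smul, Real.norm_eq_abs, abs_of_nonpos hcoef, ← mul_assoc]
  field_simp
  ring

theorem add_sq_le_young {b : ℝ} (hb : 0 < b) (a d : ℝ) :
    (a + d) ^ 2 ≤ (1 + b / 2) * a ^ 2 + (1 + 2 / b) * d ^ 2 := by
  have key : (1 + b / 2) * a ^ 2 + (1 + 2 / b) * d ^ 2 - (a + d) ^ 2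
      = (b * a - 2 * d) ^ 2 / (2 * b) := by
    field_simp
    ring
  linarith [key ▸ (by positivity : 0 ≤ (b * a - 2 * d) ^ 2 / (2 * b))]

-- `3bQ = 4d` is the equality case of Young's inequality with parameter `3b/2` for `(Q + 2d)²`.
theorem sq_one_sub_mul_add_two_mul_le {b : ℝ} (hb0 : 0 < b) (hb1 : b ≤ 1) (Q d : ℝ) :
    4 * b * ((1 - b) * (Q + 2 * d)) ^ 2 ≤ 4 * b * (1 - b / 2) * Q ^ 2 + (15 + 3 * b) * d ^ 2 := by
  nlinarith [mul_nonneg (sub_nonneg.2 hb1) (sq_nonneg (3 * b * Q - 4 * d)),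
    mul_nonneg (pow_nonneg hb0.le 3) (sq_nonneg Q), mul_nonneg (pow_nonneg hb0.le 2) (sq_nonneg Q),
    mul_nonneg hb0.le (sq_nonneg d), mul_nonneg (pow_nonneg hb0.le 2) (sq_nonneg d),
    mul_nonneg (pow_nonneg hb0.le 3) (sq_nonneg d)]

theorem lyapunov_step {b M Q M' Q' d : ℝ} (hb0 : 0 < b) (hb1 : b ≤ 1) (hM : 0 ≤ M)
    (hQ' : 0 ≤ Q') (hQ'le : Q' ≤ (1 - b) * (Q + 2 * d))
    (hM'le : M' ≤ (1 - b) * (1 + b / 2) * M + 3 * (1 - b) / b * d ^ 2) :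
    M' + 4 * Q' ^ 2 ≤ (1 - b / 2) * (M + 4 * Q ^ 2) + 18 / b * d ^ 2 := by
  rw [← mul_le_mul_iff_right₀ hb0]
  have hbM' : b * M' ≤ b * ((1 - b) * (1 + b / 2) * M) + 3 * (1 - b) * d ^ 2 := by
    calc b * M' ≤ b * ((1 - b) * (1 + b / 2) * M + 3 * (1 - b) / b * d ^ 2) := by gcongr
      _ = _ := by field_simp
  have hrhs : b * ((1 - b / 2) * (M + 4 * Q ^ 2) + 18 / b * d ^ 2)
      = b * ((1 - b / 2) * (M + 4 * Q ^ 2)) + 18 * d ^ 2 := by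
    field_simp
  rw [hrhs]
  nlinarith [sq_one_sub_mul_add_two_mul_le hb0 hb1 Q d, pow_le_pow_left₀ hQ' hQ'le 2,
    mul_nonneg (pow_nonneg hb0.le 3) hM]

section Extrapolation

variable {E : Type*} [NormedAddCommGroup E] [NormedSpace ℝ E] {β : ℕ → ℝ}
  (hβ : ∀ i, 0 < β i ∧ β i ≤ 1) {z yhat : ℕ → E}
  (hyhat : ∀ t : ℕ, yhat (t + 1) = (1 - 1 / β t) • z t + (1 / β t) • z (t + 1))
include hβ hyhat

theorem weightedAvg_norm_sub_succ_le (k : ℕ) :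
    weightedAvg β (k + 1) (fun t => ‖z (k + 2) - yhat (t + 1)‖) ≤
      (1 - β (k + 1)) *
        (weightedAvg β k (fun t => ‖z (k + 1) - yhat (t + 1)‖) + 2 * ‖z (k + 2) - z (k + 1)‖) := by
  have hβ' : ∀ i, 0 ≤ β i ∧ β i ≤ 1 := fun i => ⟨(hβ i).1.le, (hβ i).2⟩
  obtain ⟨hb0, hb1⟩ := hβ (k + 1)
  have hnew := norm_sub_extrapolate_mul hb0 hb1 (z (k + 1)) (z (k + 2))
  rw [← hyhat] at hnew
  have hold : weightedAvg β k (fun t => ‖z (k + 2) - yhat (t + 1)‖) ≤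
      weightedAvg β k (fun t => ‖z (k + 1) - yhat (t + 1)‖) + ‖z (k + 2) - z (k + 1)‖ := by
    refine (weightedAvg_mono hβ' fun t _ => ?_).trans
      (by simpa using weightedAvg_mul_add_le hβ' k _ 1 (norm_nonneg (z (k + 2) - z (k + 1))))
    exact norm_sub_le_norm_sub_add_norm_sub _ _ _ |>.trans_eq (add_comm _ _)
  rw [weightedAvg_succ, hnew]
  nlinarith [norm_nonneg (z (k + 2) - z (k + 1))]

theorem weightedAvg_norm_sub_sq_succ_le (k : ℕ) :
    weightedAvg β (k + 1) (fun t => ‖z (k + 2) - yhat (t + 1)‖ ^ 2) ≤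
      (1 - β (k + 1)) * (1 + β (k + 1) / 2) *
          weightedAvg β k (fun t => ‖z (k + 1) - yhat (t + 1)‖ ^ 2) +
        3 * (1 - β (k + 1)) / β (k + 1) * ‖z (k + 2) - z (k + 1)‖ ^ 2 := by
  have hβ' : ∀ i, 0 ≤ β i ∧ β i ≤ 1 := fun i => ⟨(hβ i).1.le, (hβ i).2⟩
  obtain ⟨hb0, hb1⟩ := hβ (k + 1)
  set b := β (k + 1)
  set d := ‖z (k + 2) - z (k + 1)‖
  have hnew := norm_sub_extrapolate_mul hb0 hb1 (z (k + 1)) (z (k + 2))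
  rw [← hyhat] at hnew
  have hnew_sq : b * ‖z (k + 2) - yhat (k + 2)‖ ^ 2 = (1 - b) ^ 2 / b * d ^ 2 := by
    field_simp
    linear_combination (b * ‖z (k + 2) - yhat (k + 2)‖ + (1 - b) * d) * hnew
  have hold : weightedAvg β k (fun t => ‖z (k + 2) - yhat (t + 1)‖ ^ 2) ≤
      (1 + b / 2) * weightedAvg β k (fun t => ‖z (k + 1) - yhat (t + 1)‖ ^ 2) +
        (1 + 2 / b) * d ^ 2 := by
    refine (weightedAvg_mono hβ' fun t _ => ?_).trans
      (weightedAvg_mul_add_le hβ' k _ _ (by positivity))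
    calc ‖z (k + 2) - yhat (t + 1)‖ ^ 2 ≤ (‖z (k + 1) - yhat (t + 1)‖ + d) ^ 2 := by
          gcongr
          exact norm_sub_le_norm_sub_add_norm_sub _ _ _ |>.trans_eq (add_comm _ _)
      _ ≤ _ := add_sq_le_young hb0 _ _
  have e : (1 - b) * ((1 + 2 / b) * d ^ 2) + (1 - b) ^ 2 / b * d ^ 2
      = 3 * (1 - b) / b * d ^ 2 := by
    field_simp
    ring
  rw [weightedAvg_succ, hnew_sq, ← e]
  nlinarith

end Extrapolation

theorem stmt_10_general {E : Type*} [NormedAddCommGroup E] [NormedSpace ℝ E]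
    (β : ℕ → ℝ) (hβ : ∀ k, 0 < β k ∧ β k ≤ 1)
    (z yhat : ℕ → E)
    (hyhat : ∀ t : ℕ, yhat (t + 1) = (1 - 1 / β t) • z t + (1 / β t) • z (t + 1))
    (ζ : ℕ → ℕ → ℝ)
    (hζ : ∀ t k : ℕ, t ≤ k → ζ t k = β t * ∏ i ∈ Finset.Icc (t + 1) k, (1 - β i))
    (q m : ℕ → ℝ)
    (hq : ∀ k : ℕ, q (k + 1) = ∑ t ∈ Finset.range (k + 1), ζ t k * ‖z (k + 1) - yhat (t + 1)‖)
    (hm : ∀ k : ℕ, m (k + 1) = ∑ t ∈ Finset.range (k + 1), ζ t k * ‖z (k + 1) - yhat (t + 1)‖ ^ 2) :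
    ∀ k : ℕ, 1 ≤ k →
      m (k + 1) + 4 * q (k + 1) ^ 2 ≤
        (1 - β k / 2) * (m k + 4 * q k ^ 2) + (18 / β k) * ‖z (k + 1) - z k‖ ^ 2 := by
  have hβ' : ∀ i, 0 ≤ β i ∧ β i ≤ 1 := fun i => ⟨(hβ i).1.le, (hβ i).2⟩
  have hζsum : ∀ k (f : ℕ → ℝ), ∑ t ∈ range (k + 1), ζ t k * f t = weightedAvg β k f :=
    fun k f => sum_congr rfl fun t ht => by
      rw [hζ t k (Nat.lt_succ_iff.mp (mem_range.mp ht)), avgWeight]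
  intro k hk
  obtain ⟨j, rfl⟩ : ∃ j, k = j + 1 := ⟨k - 1, by omega⟩
  rw [hq, hq, hm, hm, hζsum, hζsum, hζsum, hζsum]
  exact lyapunov_step (hβ (j + 1)).1 (hβ (j + 1)).2
    (weightedAvg_nonneg hβ' fun _ _ => sq_nonneg _)
    (weightedAvg_nonneg hβ' fun _ _ => norm_nonneg _)
    (weightedAvg_norm_sub_succ_le hβ hyhat j) (weightedAvg_norm_sub_sq_succ_le hβ hyhat j)

theorem stmt_10 {E : Type*} [NormedAddCommGroup E] [NormedSpace ℝ E]
    (β : ℕ → ℝ) (hβ0 : β 0 = 1) (hβ : ∀ k, 0 < β k ∧ β k ≤ 1)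
    (z yhat : ℕ → E)
    (hyhat : ∀ t : ℕ, yhat (t + 1) = (1 - 1 / β t) • z t + (1 / β t) • z (t + 1))
    (ζ : ℕ → ℕ → ℝ)
    (hζ : ∀ t k : ℕ, t ≤ k → ζ t k = β t * ∏ i ∈ Finset.Icc (t + 1) k, (1 - β i))
    (q m : ℕ → ℝ)
    (hq : ∀ k : ℕ, q (k + 1) = ∑ t ∈ Finset.range (k + 1), ζ t k * ‖z (k + 1) - yhat (t + 1)‖)
    (hm : ∀ k : ℕ, m (k + 1) = ∑ t ∈ Finset.range (k + 1), ζ t k * ‖z (k + 1) - yhat (t + 1)‖ ^ 2) :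
    ∀ k : ℕ, 1 ≤ k →
      m (k + 1) + 4 * q (k + 1) ^ 2 ≤
        (1 - β k / 2) * (m k + 4 * q k ^ 2) + (18 / β k) * ‖z (k + 1) - z k‖ ^ 2 :=
  stmt_10_general β hβ z yhat hyhat ζ hζ q m hq hm
end

section
/- For every integer k ≥ 1, (m_{k+1} + 4·q_{k+1}²)² ≤ (1 − β_k/2)·(m_k + 4·q_k²)² + (972/β_k³)·‖z_{k+1} − z_k‖⁴. -/
/-!
The weights `ζ_t^{(k)}` are the coefficients of an exponential moving average: they are
nonnegative, sum to one (because `β₀ = 1`), and `ζ^{(k+1)} = (1 - β_{k+1}) ζ^{(k)}` on the old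
indices while the new index gets weight `β_{k+1}`. Moving from `z_k` to `z_{k+1}` changes every
old distance by at most `d = ‖z_{k+1} - z_k‖` (triangle inequality), and the new extrapolated point
is at distance `(1/β_k - 1) d` from `z_{k+1}`. This gives `q_{k+1} ≤ (1 - β_k)(q_k + 2d)` and a
similar bound for `m_{k+1}`; together with `q_k² ≤ m_k` (Cauchy–Schwarz for the weights) they yield
the contraction `β_k Φ_{k+1} ≤ β_k (1 - β_k/2) Φ_k + 19 d²` for `Φ = m + 4q²`, and squaring with
Young's inequality gives the claim with constant `2 · 19² = 722 ≤ 972`.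
-/

open Finset

section WeightedAverage

variable {ι : Type*} {s : Finset ι} {w : ι → ℝ}

theorem sq_sum_mul_le_sum_mul_sq (hw : ∀ i ∈ s, 0 ≤ w i) (hw1 : ∑ i ∈ s, w i = 1)
    (a : ι → ℝ) : (∑ i ∈ s, w i * a i) ^ 2 ≤ ∑ i ∈ s, w i * a i ^ 2 := by
  simpa [hw1] using sum_sq_le_sum_mul_sum_of_sq_le_mul s hw
    (fun i hi => mul_nonneg (hw i hi) (sq_nonneg (a i))) (fun i _ => (by ring : _ = _).le)

theorem sum_mul_le_sum_mul_add (hw : ∀ i ∈ s, 0 ≤ w i) (hw1 : ∑ i ∈ s, w i = 1)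
    {a a' : ι → ℝ} {d : ℝ} (h : ∀ i ∈ s, a' i ≤ a i + d) :
    ∑ i ∈ s, w i * a' i ≤ ∑ i ∈ s, w i * a i + d :=
  calc ∑ i ∈ s, w i * a' i ≤ ∑ i ∈ s, w i * (a i + d) :=
        sum_le_sum fun i hi => mul_le_mul_of_nonneg_left (h i hi) (hw i hi)
    _ = ∑ i ∈ s, w i * a i + d := by
      simp only [mul_add, sum_add_distrib, ← sum_mul, hw1, one_mul]

theorem sum_mul_sq_le_sum_mul_sq_add (hw : ∀ i ∈ s, 0 ≤ w i) (hw1 : ∑ i ∈ s, w i = 1)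
    {a a' : ι → ℝ} {d : ℝ} (h0 : ∀ i ∈ s, 0 ≤ a' i) (h : ∀ i ∈ s, a' i ≤ a i + d) :
    ∑ i ∈ s, w i * a' i ^ 2 ≤
      ∑ i ∈ s, w i * a i ^ 2 + 2 * (∑ i ∈ s, w i * a i) * d + d ^ 2 :=
  calc ∑ i ∈ s, w i * a' i ^ 2 ≤ ∑ i ∈ s, w i * (a i + d) ^ 2 :=
        sum_le_sum fun i hi =>
          mul_le_mul_of_nonneg_left (pow_le_pow_left₀ (h0 i hi) (h i hi) 2) (hw i hi)
    _ = ∑ i ∈ s, w i * a i ^ 2 + 2 * d * ∑ i ∈ s, w i * a i + d ^ 2 * ∑ i ∈ s, w i := by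
      simp only [mul_sum, ← sum_add_distrib]
      exact sum_congr rfl fun i _ => by ring
    _ = _ := by rw [hw1]; ring

end WeightedAverage

def momentumWeight (β : ℕ → ℝ) (t k : ℕ) : ℝ :=
  β t * ∏ i ∈ Icc (t + 1) k, (1 - β i)

namespace momentumWeight

variable {β : ℕ → ℝ}

theorem self (k : ℕ) : momentumWeight β k k = β k := by
  simp [momentumWeight]

theorem succ {t k : ℕ} (h : t ≤ k) :
    momentumWeight β t (k + 1) = (1 - β (k + 1)) * momentumWeight β t k := by
  rw [momentumWeight, momentumWeight, prod_Icc_succ_top (by omega)]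
  ring

theorem nonneg (hβ : ∀ i, 0 ≤ β i ∧ β i ≤ 1) (t k : ℕ) : 0 ≤ momentumWeight β t k :=
  mul_nonneg (hβ t).1 (prod_nonneg fun i _ => sub_nonneg.2 (hβ i).2)

theorem sum_range_succ_mul (f : ℕ → ℝ) (k : ℕ) :
    ∑ t ∈ range (k + 2), momentumWeight β t (k + 1) * f t =
      (1 - β (k + 1)) * ∑ t ∈ range (k + 1), momentumWeight β t k * f t +
        β (k + 1) * f (k + 1) := by
  rw [sum_range_succ, self, mul_sum]
  congr 1
  exact sum_congr rfl fun t ht => by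
    rw [succ (Nat.lt_succ_iff.mp (mem_range.mp ht)), mul_assoc]

theorem sum_range (hβ0 : β 0 = 1) (k : ℕ) :
    ∑ t ∈ range (k + 1), momentumWeight β t k = 1 := by
  induction k with
  | zero => simp [self, hβ0]
  | succ k ih => simpa [ih] using sum_range_succ_mul (β := β) (fun _ => 1) k

end momentumWeight

theorem norm_sub_extrapolate {E : Type*} [NormedAddCommGroup E] [NormedSpace ℝ E]
    {b : ℝ} (hb : 0 < b) (hb1 : b ≤ 1) (x x' : E) :
    ‖x' - ((1 - 1 / b) • x + (1 / b) • x')‖ = (1 / b - 1) * ‖x' - x‖ := by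
  have h1b : 1 ≤ 1 / b := by rw [le_div_iff₀ hb]; linarith
  rw [show x' - ((1 - 1 / b) • x + (1 / b) • x') = (1 - 1 / b) • (x' - x) by module,
    norm_smul, Real.norm_of_nonpos (by linarith)]
  ring

section MomentumDist

variable {E : Type*} [NormedAddCommGroup E]

/-- `q_{k+1} = momentumDist β (fun t => ŷ_{t+1}) k z_{k+1}`, and likewise `m_{k+1}` for
`momentumDistSq`. -/
def momentumDist (β : ℕ → ℝ) (y : ℕ → E) (k : ℕ) (x : E) : ℝ :=
  ∑ t ∈ range (k + 1), momentumWeight β t k * ‖x - y t‖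

def momentumDistSq (β : ℕ → ℝ) (y : ℕ → E) (k : ℕ) (x : E) : ℝ :=
  ∑ t ∈ range (k + 1), momentumWeight β t k * ‖x - y t‖ ^ 2

variable {β : ℕ → ℝ} (y : ℕ → E) (k : ℕ)

theorem momentumDist_succ (x : E) :
    momentumDist β y (k + 1) x =
      (1 - β (k + 1)) * momentumDist β y k x + β (k + 1) * ‖x - y (k + 1)‖ :=
  momentumWeight.sum_range_succ_mul (fun t => ‖x - y t‖) k

theorem momentumDistSq_succ (x : E) :
    momentumDistSq β y (k + 1) x =
      (1 - β (k + 1)) * momentumDistSq β y k x + β (k + 1) * ‖x - y (k + 1)‖ ^ 2 :=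
  momentumWeight.sum_range_succ_mul (fun t => ‖x - y t‖ ^ 2) k

theorem momentumDist_nonneg (hβ : ∀ i, 0 ≤ β i ∧ β i ≤ 1) (x : E) :
    0 ≤ momentumDist β y k x :=
  sum_nonneg fun t _ => mul_nonneg (momentumWeight.nonneg hβ t k) (norm_nonneg _)

theorem momentumDistSq_nonneg (hβ : ∀ i, 0 ≤ β i ∧ β i ≤ 1) (x : E) :
    0 ≤ momentumDistSq β y k x :=
  sum_nonneg fun t _ => mul_nonneg (momentumWeight.nonneg hβ t k) (sq_nonneg _)

theorem sq_momentumDist_le_momentumDistSq (hβ0 : β 0 = 1) (hβ : ∀ i, 0 ≤ β i ∧ β i ≤ 1)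
    (x : E) : momentumDist β y k x ^ 2 ≤ momentumDistSq β y k x :=
  sq_sum_mul_le_sum_mul_sq (fun t _ => momentumWeight.nonneg hβ t k)
    (momentumWeight.sum_range hβ0 k) _

theorem momentumDist_le_add (hβ0 : β 0 = 1) (hβ : ∀ i, 0 ≤ β i ∧ β i ≤ 1) (x x' : E) :
    momentumDist β y k x' ≤ momentumDist β y k x + ‖x' - x‖ :=
  sum_mul_le_sum_mul_add (fun t _ => momentumWeight.nonneg hβ t k)
    (momentumWeight.sum_range hβ0 k) fun t _ =>
      (norm_sub_le_norm_sub_add_norm_sub x' x (y t)).trans_eq (add_comm _ _)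

theorem momentumDistSq_le_add (hβ0 : β 0 = 1) (hβ : ∀ i, 0 ≤ β i ∧ β i ≤ 1) (x x' : E) :
    momentumDistSq β y k x' ≤
      momentumDistSq β y k x + 2 * momentumDist β y k x * ‖x' - x‖ + ‖x' - x‖ ^ 2 :=
  sum_mul_sq_le_sum_mul_sq_add (fun t _ => momentumWeight.nonneg hβ t k)
    (momentumWeight.sum_range hβ0 k) (fun _ _ => norm_nonneg _)
    fun t _ => (norm_sub_le_norm_sub_add_norm_sub x' x (y t)).trans_eq (add_comm _ _)

end MomentumDist

theorem potential_contraction {b Q Q' M M' d : ℝ} (hb : 0 < b) (hb1 : b ≤ 1)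
    (hQ' : Q' ≤ (1 - b) * (Q + 2 * d)) (hQ'0 : 0 ≤ Q')
    (hM' : b * M' ≤ b * (1 - b) * (M + 2 * Q * d + d ^ 2) + (1 - b) ^ 2 * d ^ 2)
    (hQM : Q ^ 2 ≤ M) :
    b * (M' + 4 * Q' ^ 2) ≤ b * (1 - b / 2) * (M + 4 * Q ^ 2) + 19 * d ^ 2 := by
  have hQ'sq : b * Q' ^ 2 ≤ b * ((1 - b) * (Q + 2 * d)) ^ 2 :=
    mul_le_mul_of_nonneg_left (pow_le_pow_left₀ hQ'0 hQ' 2) hb.le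
  have c1 : 0 ≤ (1 - b) * (18 - 16 * b) * (b * Q - 2 * d) ^ 2 :=
    mul_nonneg (mul_nonneg (by linarith) (by linarith)) (sq_nonneg _)
  have c2 : 0 ≤ b ^ 2 * (M - Q ^ 2) := mul_nonneg (sq_nonneg b) (by linarith)
  have c3 : 0 ≤ b * (19 + 16 * b - 16 * b ^ 2) * d ^ 2 :=
    mul_nonneg (mul_nonneg hb.le (by nlinarith)) (sq_nonneg d)
  have c4 : 0 ≤ b ^ 2 * (2 + 9 / 2 * b - 4 * b ^ 2) * Q ^ 2 :=
    mul_nonneg (mul_nonneg (sq_nonneg b) (by nlinarith)) (sq_nonneg Q)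
  nlinarith

/-- Squaring a contraction `b Y ≤ b (1 - b/2) X + c`: Young's inequality with weights
`2/(2 - b)` and `2/b` keeps the factor `1 - b/2` in front of `X²`. -/
theorem sq_le_of_contraction {b X Y c : ℝ} (hb : 0 < b) (hb1 : b ≤ 1) (hY : 0 ≤ Y)
    (h : b * Y ≤ b * (1 - b / 2) * X + c) :
    Y ^ 2 ≤ (1 - b / 2) * X ^ 2 + 2 * c ^ 2 / b ^ 3 := by
  have hsq : b * (b * Y) ^ 2 ≤ b * (b * (1 - b / 2) * X + c) ^ 2 :=
    mul_le_mul_of_nonneg_left (pow_le_pow_left₀ (by positivity) h 2) hb.le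
  have young : 0 ≤ (2 - b) * (b ^ 2 * X - 2 * c) ^ 2 :=
    mul_nonneg (by linarith) (sq_nonneg _)
  rw [← sub_nonneg, show (1 - b / 2) * X ^ 2 + 2 * c ^ 2 / b ^ 3 - Y ^ 2 =
    ((1 - b / 2) * X ^ 2 * b ^ 3 + 2 * c ^ 2 - Y ^ 2 * b ^ 3) / b ^ 3 by field_simp]
  apply div_nonneg _ (by positivity)
  nlinarith

theorem momentumPotential_sq_le {E : Type*} [NormedAddCommGroup E] {β : ℕ → ℝ}
    (hβ0 : β 0 = 1) (hβ : ∀ i, 0 < β i ∧ β i ≤ 1) (y : ℕ → E) (k : ℕ) {x x' : E}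
    (hx' : β (k + 1) * ‖x' - y (k + 1)‖ = (1 - β (k + 1)) * ‖x' - x‖) :
    (momentumDistSq β y (k + 1) x' + 4 * momentumDist β y (k + 1) x' ^ 2) ^ 2 ≤
      (1 - β (k + 1) / 2) * (momentumDistSq β y k x + 4 * momentumDist β y k x ^ 2) ^ 2 +
        972 / β (k + 1) ^ 3 * ‖x' - x‖ ^ 4 := by
  obtain ⟨hb, hb1⟩ := hβ (k + 1)
  have hβ' : ∀ i, 0 ≤ β i ∧ β i ≤ 1 := fun i => ⟨(hβ i).1.le, (hβ i).2⟩
  set b := β (k + 1)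
  set d := ‖x' - x‖
  have h1b : 0 ≤ 1 - b := by linarith
  have hQ : momentumDist β y (k + 1) x' ≤ (1 - b) * (momentumDist β y k x + 2 * d) := by
    rw [momentumDist_succ, hx']
    nlinarith [mul_le_mul_of_nonneg_left (momentumDist_le_add y k hβ0 hβ' x x') h1b]
  have hM : b * momentumDistSq β y (k + 1) x' ≤
      b * (1 - b) * (momentumDistSq β y k x + 2 * momentumDist β y k x * d + d ^ 2) +
        (1 - b) ^ 2 * d ^ 2 := by
    have hx'sq : b * (b * ‖x' - y (k + 1)‖ ^ 2) = (1 - b) ^ 2 * d ^ 2 := by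
      rw [← mul_pow, ← hx']; ring
    rw [momentumDistSq_succ, mul_add, hx'sq]
    nlinarith [mul_le_mul_of_nonneg_left (momentumDistSq_le_add y k hβ0 hβ' x x')
      (mul_nonneg hb.le h1b)]
  have hY : 0 ≤ momentumDistSq β y (k + 1) x' + 4 * momentumDist β y (k + 1) x' ^ 2 :=
    add_nonneg (momentumDistSq_nonneg y _ hβ' x') (by positivity)
  refine (sq_le_of_contraction hb hb1 hY (potential_contraction hb hb1 hQ
    (momentumDist_nonneg y _ hβ' x') hM (sq_momentumDist_le_momentumDistSq y k hβ0 hβ' x))).trans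
    (add_le_add_right ?_ _)
  rw [div_mul_eq_mul_div]
  exact div_le_div_of_nonneg_right (by nlinarith [pow_nonneg (sq_nonneg d) 2]) (by positivity)

theorem stmt_11 {E : Type*} [NormedAddCommGroup E] [NormedSpace ℝ E]
    (β : ℕ → ℝ) (hβ0 : β 0 = 1) (hβ : ∀ k, 0 < β k ∧ β k ≤ 1)
    (z yhat : ℕ → E)
    (hyhat : ∀ t : ℕ, yhat (t + 1) = (1 - 1 / β t) • z t + (1 / β t) • z (t + 1))
    (ζ : ℕ → ℕ → ℝ)
    (hζ : ∀ t k : ℕ, t ≤ k → ζ t k = β t * ∏ i ∈ Finset.Icc (t + 1) k, (1 - β i))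
    (q m : ℕ → ℝ)
    (hq : ∀ k : ℕ, q (k + 1) = ∑ t ∈ Finset.range (k + 1), ζ t k * ‖z (k + 1) - yhat (t + 1)‖)
    (hm : ∀ k : ℕ, m (k + 1) = ∑ t ∈ Finset.range (k + 1), ζ t k * ‖z (k + 1) - yhat (t + 1)‖ ^ 2) :
    ∀ k : ℕ, 1 ≤ k →
      (m (k + 1) + 4 * q (k + 1) ^ 2) ^ 2 ≤
        (1 - β k / 2) * (m k + 4 * q k ^ 2) ^ 2 + (972 / β k ^ 3) * ‖z (k + 1) - z k‖ ^ 4 := by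
  intro k hk
  obtain ⟨j, rfl⟩ := Nat.exists_eq_add_of_le' hk
  have hζw : ∀ k (f : ℕ → ℝ), ∑ t ∈ range (k + 1), ζ t k * f t =
      ∑ t ∈ range (k + 1), momentumWeight β t k * f t := fun k f =>
    sum_congr rfl fun t ht => by rw [hζ t k (Nat.lt_succ_iff.mp (mem_range.mp ht)), momentumWeight]
  have hq' : ∀ k, q (k + 1) = momentumDist β (fun t => yhat (t + 1)) k (z (k + 1)) :=
    fun k => (hq k).trans (hζw _ _)
  have hm' : ∀ k, m (k + 1) = momentumDistSq β (fun t => yhat (t + 1)) k (z (k + 1)) :=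
    fun k => (hm k).trans (hζw _ _)
  rw [hq', hq', hm', hm']
  refine momentumPotential_sq_le hβ0 hβ _ j ?_
  obtain ⟨hb, hb1⟩ := hβ (j + 1)
  rw [hyhat, norm_sub_extrapolate hb hb1, ← mul_assoc, mul_sub, mul_one_div_cancel hb.ne', mul_one]
end
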